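/- Let $J, K \subseteq S$ in $S_n$ with $x \in X_J^{-1} \cap X_K$. If $i$ and $i+1$ both lie in $x^{-1}\mathcal{J}_q \cap \mathcal{K}_m$ for some connected components $\mathcal{J}_q$ of the graph of $J$ and $\mathcal{K}_m$ of the graph of $K$, then $(x(i), x(i+1))$ is an edge of $\mathcal{J}$, i.e. $x(i+1) = x(i)+1$ and $(x(i), x(i)+1) \in J$; hence $(i,i+1)$ is an edge of the graph $x^{-1}\mathcal{J} \cap \mathcal{K}$. -/

import Mathlib

open Equiv Pointwise

/-- The copy of `Sₙ` inside `Equiv.Perm ℕ`: permutations fixing every point `≥ n`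
(we use points `0,…,n-1` instead of `1,…,n`). -/
def symN (n : ℕ) : Subgroup (Equiv.Perm ℕ) where
  carrier := {x | ∀ i, n ≤ i → x i = i}
  one_mem' := fun _ _ => rfl
  mul_mem' := by
    intro a b ha hb i hi
    simp only [Set.mem_setOf_eq] at *
    simp [Equiv.Perm.mul_apply, hb i hi, ha i hi]
  inv_mem' := by
    intro a ha i hi
    simp only [Set.mem_setOf_eq] at *
    conv_lhs => rw [← ha i hi]
    simp

/-- The number of inversions (the Coxeter length in `Sₙ`). -/
def invNum (n : ℕ) (x : Equiv.Perm ℕ) : ℕ :=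
  ((Finset.range n ×ˢ Finset.range n).filter
    (fun p => p.1 < p.2 ∧ x p.2 < x p.1)).card

/-- The adjacent transpositions `(k, k+1)` for `k ∈ J`. -/
def gens (J : Set ℕ) : Set (Equiv.Perm ℕ) := (fun k => Equiv.swap k (k + 1)) '' J

/-- The parabolic subgroup `W_J`. -/
def parabolic (J : Set ℕ) : Subgroup (Equiv.Perm ℕ) := Subgroup.closure (gens J)

/-- `x ∈ X_J`: a minimal length left coset representative of `W_J` in `Sₙ`. -/
def isMinLeft (n : ℕ) (J : Set ℕ) (x : Equiv.Perm ℕ) : Prop :=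
  x ∈ symN n ∧ ∀ w ∈ parabolic J, invNum n x ≤ invNum n (x * w)

/-- `x ∈ X_J⁻¹`: a minimal length right coset representative of `W_J` in `Sₙ`. -/
def isMinRight (n : ℕ) (J : Set ℕ) (x : Equiv.Perm ℕ) : Prop :=
  x ∈ symN n ∧ ∀ w ∈ parabolic J, invNum n x ≤ invNum n (w * x)

/-- `i1` and `j1` lie in the same connected component of the graph `𝒥` with
edges `(k, k+1)` for `k ∈ J`. -/
def sameComp (J : Set ℕ) (i j : ℕ) : Prop :=
  ∀ t, min i j ≤ t → t < max i j → t ∈ J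

/-- The vertex set of the connected component of the graph of `J` containing `a`. -/
def comp (J : Set ℕ) (a : ℕ) : Set ℕ := {b | sameComp J a b}

/-- `c` is a composition of `n`. -/
def isComposition (n : ℕ) (c : List ℕ) : Prop := c.sum = n ∧ ∀ k ∈ c, 0 < k

/-- The `q`-th consecutive block determined by a composition `c`. -/
def blockSet (c : List ℕ) (q : ℕ) : Set ℕ := Set.Ico ((c.take q).sum) ((c.take (q + 1)).sum)

/-- The set of adjacent transpositions corresponding to a composition `c`:
those `(i, i+1)` with `i, i+1` in the same block. -/
def edgesOf (c : List ℕ) : Set ℕ := {i | ∃ q, i ∈ blockSet c q ∧ i + 1 ∈ blockSet c q}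

/-- `i` indexes an edge `(i, i+1)` of the image graph `x⁻¹𝒥`, i.e. `(x i, x (i+1))`
is an edge of `𝒥` (as an unordered pair). -/
def imgEdges (x : Equiv.Perm ℕ) (J : Set ℕ) : Set ℕ :=
  {i | ∃ t ∈ J, (x i = t ∧ x (i + 1) = t + 1) ∨ (x i = t + 1 ∧ x (i + 1) = t)}

/-! A minimal coset representative ascends along the generators it is minimal for: `x ∈ X_K`
gives `x k < x (k+1)` for `k ∈ K`, and `x ∈ X_J⁻¹` makes `x⁻¹` ascend along `J`. The hypotheses
put `i ∈ K`, so `x i < x (i+1)`, and every `v ∈ [x i, x (i+1))` in `J`; hence `x⁻¹` strictly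
increases on `[x i, x (i+1)]` while climbing only from `i` to `i+1`, forcing `x (i+1) = x i + 1`. -/

lemma swap_apply_lt_swap_apply {k a b : ℕ} (hab : a < b) (hne : ¬(a = k ∧ b = k + 1)) :
    swap k (k + 1) a < swap k (k + 1) b := by
  simp only [swap_apply_def]
  split_ifs <;> omega

lemma lt_or_eq_of_swap_apply_lt_swap_apply {k a b : ℕ}
    (h : swap k (k + 1) a < swap k (k + 1) b) : a < b ∨ (a = k + 1 ∧ b = k) := by
  simp only [swap_apply_def] at h
  split_ifs at h <;> omega

lemma swap_apply_lt {k n a : ℕ} (hk : k + 1 < n) (ha : a < n) : swap k (k + 1) a < n := by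
  simp only [swap_apply_def]
  split_ifs <;> omega

lemma swap_mem_parabolic {J : Set ℕ} {k : ℕ} (hk : k ∈ J) : swap k (k + 1) ∈ parabolic J :=
  Subgroup.subset_closure ⟨k, hk, rfl⟩

lemma symN.apply_lt {n i : ℕ} {x : Perm ℕ} (hx : x ∈ symN n) (hi : i < n) : x i < n := by
  by_contra! h
  have : x i = i := x.injective (hx _ h)
  omega

lemma symN.apply_lt_apply_succ {n k : ℕ} {x : Perm ℕ} (hx : x ∈ symN n) (hk : n ≤ k + 1) :
    x k < x (k + 1) := by
  rw [hx (k + 1) hk]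
  rcases hk.eq_or_lt with rfl | hk
  · exact symN.apply_lt hx k.lt_succ_self
  · rw [hx k (by omega)]
    exact k.lt_succ_self

lemma invNum_mul_swap_lt {n k : ℕ} (hk : k + 1 < n) {x : Perm ℕ} (h : x (k + 1) < x k) :
    invNum n (x * swap k (k + 1)) < invNum n x := by
  unfold invNum
  set σ := swap k (k + 1)
  set B := (Finset.range n ×ˢ Finset.range n).filter (fun p => p.1 < p.2 ∧ x p.2 < x p.1)
  have hmem : (k, k + 1) ∈ B := by
    simp only [B, Finset.mem_filter, Finset.mem_product, Finset.mem_range]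
    exact ⟨⟨by omega, hk⟩, by omega, h⟩
  -- `Prod.map σ σ` carries the inversions of `x * σ` onto those of `x` other than `(k, k+1)`.
  calc _ ≤ (B.erase (k, k + 1)).card := by
        refine Finset.card_le_card_of_injOn (Prod.map σ σ) ?_ ?_
        · rintro ⟨a, b⟩ hp
          rw [Finset.mem_coe, Finset.mem_filter] at hp
          simp only [Finset.mem_product, Finset.mem_range, Perm.mul_apply] at hp
          obtain ⟨⟨ha, hb⟩, hab, hx⟩ := hp
          have hne : ¬(a = k ∧ b = k + 1) := by
            rintro ⟨rfl, rfl⟩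
            simp only [σ, swap_apply_left, swap_apply_right] at hx
            omega
          simp only [Finset.coe_erase, Set.mem_sdiff, Finset.mem_coe, Set.mem_singleton_iff,
            B, Finset.mem_filter, Finset.mem_product, Finset.mem_range, Prod.map_apply,
            Prod.ext_iff]
          refine ⟨⟨⟨swap_apply_lt hk ha, swap_apply_lt hk hb⟩,
            swap_apply_lt_swap_apply hab hne, hx⟩, ?_⟩
          simp only [σ, swap_apply_def]
          split_ifs <;> omega
        · exact (Prod.map_injective.2 ⟨σ.injective, σ.injective⟩).injOn
    _ < B.card := Finset.card_erase_lt_of_mem hmem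

lemma invNum_swap_mul_lt {n v : ℕ} (hv : v + 1 < n) {x : Perm ℕ} (hx : x ∈ symN n)
    (h : x⁻¹ (v + 1) < x⁻¹ v) : invNum n (swap v (v + 1) * x) < invNum n x := by
  unfold invNum
  apply Finset.card_lt_card
  -- The inversions of `σ * x` are those of `x` except `(x⁻¹ (v+1), x⁻¹ v)`.
  refine ⟨fun p hp => ?_, fun hsub => ?_⟩
  · rw [Finset.mem_filter] at hp ⊢
    simp only [Finset.mem_product, Finset.mem_range, Perm.mul_apply] at hp ⊢
    obtain ⟨hpn, hlt, hpx⟩ := hp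
    refine ⟨hpn, hlt, ?_⟩
    rcases lt_or_eq_of_swap_apply_lt_swap_apply hpx with hpx | ⟨e2, e1⟩
    · exact hpx
    · rw [← e2, ← e1] at h
      simp only [Perm.coe_inv, symm_apply_apply] at h
      omega
  · have hxinv := inv_mem hx
    have hmem : (x⁻¹ (v + 1), x⁻¹ v) ∈ (Finset.range n ×ˢ Finset.range n).filter
        (fun p => p.1 < p.2 ∧ x p.2 < x p.1) := by
      simp only [Finset.mem_filter, Finset.mem_product, Finset.mem_range, Perm.coe_inv,
        apply_symm_apply]
      exact ⟨⟨symN.apply_lt hxinv hv, symN.apply_lt hxinv (by omega)⟩, h, by omega⟩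
    have := (Finset.mem_filter.1 (hsub hmem)).2.2
    simp at this

lemma isMinLeft.apply_lt_apply_succ {n : ℕ} {K : Set ℕ} {x : Perm ℕ} (hx : isMinLeft n K x)
    {k : ℕ} (hk : k ∈ K) : x k < x (k + 1) := by
  obtain ⟨hxs, hmin⟩ := hx
  rcases lt_or_ge (k + 1) n with hkn | hkn
  · by_contra! hle
    have hlt : x (k + 1) < x k := hle.lt_of_ne (x.injective.ne (by omega))
    exact (hmin _ (swap_mem_parabolic hk)).not_gt (invNum_mul_swap_lt hkn hlt)
  · exact symN.apply_lt_apply_succ hxs hkn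

lemma isMinRight.inv_apply_lt_inv_apply_succ {n : ℕ} {J : Set ℕ} {x : Perm ℕ}
    (hx : isMinRight n J x) {v : ℕ} (hv : v ∈ J) : x⁻¹ v < x⁻¹ (v + 1) := by
  obtain ⟨hxs, hmin⟩ := hx
  rcases lt_or_ge (v + 1) n with hvn | hvn
  · by_contra! hle
    have hlt : x⁻¹ (v + 1) < x⁻¹ v := hle.lt_of_ne (x⁻¹.injective.ne (by omega))
    exact (hmin _ (swap_mem_parabolic hv)).not_gt (invNum_swap_mul_lt hvn hxs hlt)
  · exact symN.apply_lt_apply_succ (inv_mem hxs) hvn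

lemma add_sub_le_of_lt_succ {f : ℕ → ℕ} {a b : ℕ} (hab : a ≤ b)
    (h : ∀ t, a ≤ t → t < b → f t < f (t + 1)) : f a + (b - a) ≤ f b := by
  induction b, hab using Nat.le_induction with
  | base => simp
  | succ b hab ih =>
    have := ih fun t ht htb => h t ht (by omega)
    have := h b hab b.lt_succ_self
    omega

theorem stmt5_general (n : ℕ) (J K : Set ℕ)
    (x : Equiv.Perm ℕ) (hx : isMinRight n J x ∧ isMinLeft n K x)
    (i : ℕ) (hJc : sameComp J (x i) (x (i + 1)))
    (hKc : sameComp K i (i + 1)) :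
    x (i + 1) = x i + 1 ∧ x i ∈ J ∧ i ∈ imgEdges x J ∩ K := by
  obtain ⟨hR, hL⟩ := hx
  have hiK : i ∈ K := hKc i (by omega) (by omega)
  have hlt : x i < x (i + 1) := hL.apply_lt_apply_succ hiK
  have hJ : ∀ v, x i ≤ v → v < x (i + 1) → v ∈ J := fun v h₁ h₂ =>
    hJc v (by omega) (by omega)
  have hclimb := add_sub_le_of_lt_succ (f := (x⁻¹ ·)) hlt.le fun v h₁ h₂ =>
    hR.inv_apply_lt_inv_apply_succ (hJ v h₁ h₂)
  simp only [Perm.coe_inv, symm_apply_apply] at hclimb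
  have heq : x (i + 1) = x i + 1 := by omega
  have hiJ : x i ∈ J := hJ (x i) le_rfl hlt
  exact ⟨heq, hiJ, ⟨x i, hiJ, Or.inl ⟨rfl, heq⟩⟩, hiK⟩

/-- let `x ∈ X_J⁻¹ ∩ X_K`.  If `i` and `i+1` lie in the same
`x⁻¹𝒥_q ∩ 𝒦ₘ` (i.e. `x i` and `x (i+1)` lie in the same component of the graph
of `J`, and `i`, `i+1` in the same component of the graph of `K`), then
`(x i, x (i+1))` is an edge of `𝒥`: `x (i+1) = x i + 1` and `x i ∈ J`; hence
`(i, i+1)` is an edge of `x⁻¹𝒥 ∩ 𝒦`. -/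
theorem stmt5 (n : ℕ) (J K : Set ℕ)
    (hJ : ∀ k ∈ J, k + 1 < n) (hK : ∀ k ∈ K, k + 1 < n)
    (x : Equiv.Perm ℕ) (hx : isMinRight n J x ∧ isMinLeft n K x)
    (i : ℕ) (hJc : sameComp J (x i) (x (i + 1)))
    (hKc : sameComp K i (i + 1)) :
    x (i + 1) = x i + 1 ∧ x i ∈ J ∧ i ∈ imgEdges x J ∩ K :=
  stmt5_general n J K x hx i hJc hKc
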